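/- For every α > 0 and every β > 0 there exists a preference profile P over four candidates {a,b,c,d} such that: (i) the pair {a,b} has deletion-clone value at most α and swap-clone value at most β; (ii) a is the unique Schulze winner of P (S_{a,y} ≥ S_{y,a} for all y ≠ a, with at least one strict inequality against every other candidate's claim, so no other candidate is a Schulze winner); (iii) d is the unique Schulze winner of P_{-a}; and (iv) c is the unique Schulze winner of P_{-b}. Consequently, for four or more candidates, Schulze's rule is not weakly independent of α-deletion clones or of β-swap clones for any α > 0 or β > 0. (An explicit witness, for k large enough that 13/(2k+26) is below min(α,β), is the profile with k+7 voters d≻a≻b≻c, k voters c≻a≻b≻d, 10 voters b≻c≻a≻d, 2 voters a≻b≻d≻c, 3 voters c≻a≻d≻b, and 4 voters d≻c≻a≻b.) -/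

import Mathlib

/-!
With `a, b, c, d = 0, 1, 2, 3`, the witness profile has pairwise margins
`M_ab = 2k + 6`, `M_bc = 12`, `M_ca = 8`, `M_ad = 4`, `M_db = 2`, `M_cd = 0`.
Beatpath strengths are bounded below by paths of length at most two, and above by cuts:
a path leaving a set `A` uses some edge from `A` to its complement, so its strength is at most
the largest margin across that edge. In `P` the cut `{b, c}` gives
`S_ba, S_ca ≤ 8 < 10 ≤ S_ab, S_ac` once `k ≥ 2`, and the cut `{d}` gives `S_da ≤ 2 < 4 ≤ S_ad`. Deleting `a` leaves `b` and `c` no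
positive margin into `d`, while `d → b → c` has strength `2`; deleting `b` leaves `a` and `d`
no positive margin into `c`, while `c → a → d` has strength `4`. Only the `13` voters of the
blocks `b ≻ c ≻ a ≻ d` and `c ≻ a ≻ d ≻ b` separate `a` from `b`, each by one candidate, so both
clone values equal `13 / (2k + 26)`.
-/

open Finset

/-- A ranking (strict total order) of the candidate set `D ⊆ Fin 4`, encoded as a
duplicate-free list (best candidate first) whose set of elements is exactly `D`. -/
def Ranking (D : Finset (Fin 4)) : Type := {l : List (Fin 4) // l.Nodup ∧ l.toFinset = D}

/-- The (0-indexed) position of candidate `x` in ranking `r`. -/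
def rpos {D : Finset (Fin 4)} (r : Ranking D) (x : Fin 4) : ℕ := r.val.idxOf x

/-- Delete candidate `x` from a ranking. -/
def eraseCand {D : Finset (Fin 4)} (x : Fin 4) (r : Ranking D) : Ranking (D.erase x) :=
  ⟨r.val.erase x, r.2.1.erase x, by
    ext c
    simp [List.Nodup.mem_erase_iff r.2.1, Finset.mem_erase, ← r.2.2]⟩

/-- The pairwise margin `M_{x,y}` of `x` over `y` in a profile. -/
def margin {D : Finset (Fin 4)} {n : ℕ} (P : Fin n → Ranking D) (x y : Fin 4) : ℤ :=
  ((univ.filter fun i => rpos (P i) x < rpos (P i) y).card : ℤ) -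
    ((univ.filter fun i => rpos (P i) y < rpos (P i) x).card : ℤ)

/-- `s` is the strength of some path from `x` to `y` in the candidate set `D`:
a sequence of `k ≥ 2` candidates of `D` starting at `x` and ending at `y`, whose
strength is the minimum margin along its consecutive pairs. -/
def IsPathStrength {D : Finset (Fin 4)} {n : ℕ} (P : Fin n → Ranking D)
    (x y : Fin 4) (s : ℤ) : Prop :=
  ∃ l : List (Fin 4), 2 ≤ l.length ∧ (∀ c ∈ l, c ∈ D) ∧
    l.head? = some x ∧ l.getLast? = some y ∧
    ((l.zip l.tail).map fun p => margin P p.1 p.2).minimum = (s : WithTop ℤ)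

/-- The beatpath strength `S_{x,y}`: the maximum strength over all paths from `x` to `y`. -/
noncomputable def beatpath {D : Finset (Fin 4)} {n : ℕ} (P : Fin n → Ranking D)
    (x y : Fin 4) : ℤ :=
  sSup {s : ℤ | IsPathStrength P x y s}

/-- `x` is a Schulze winner: `x` is a candidate and `S_{x,y} ≥ S_{y,x}` for every other
candidate `y`. -/
def SchulzeWinner {D : Finset (Fin 4)} {n : ℕ} (P : Fin n → Ranking D) (x : Fin 4) : Prop :=
  x ∈ D ∧ ∀ y ∈ D, y ≠ x → beatpath P y x ≤ beatpath P x y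

theorem List.idxOf_erase_lt_idxOf_erase_iff {α : Type*} [DecidableEq α] (l : List α)
    {x u v : α} (hu : u ≠ x) (hv : v ≠ x) :
    (l.erase x).idxOf u < (l.erase x).idxOf v ↔ l.idxOf u < l.idxOf v := by
  induction l with
  | nil => simp
  | cons a t ih =>
    by_cases hax : a = x
    · subst hax
      simp [hu.symm, hv.symm]
    · simp only [List.erase_cons, beq_iff_eq, hax, if_false, List.idxOf_cons, cond_eq_ite]
      by_cases hau : a = u <;> by_cases hav : a = v <;> simp_all

theorem List.exists_mem_zip_tail_of_head?_of_getLast? {α : Type*} (p : α → Prop) :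
    ∀ {l : List α} {x y : α}, l.head? = some x → l.getLast? = some y → p x → ¬ p y →
      ∃ q ∈ l.zip l.tail, p q.1 ∧ ¬ p q.2
  | [], _, _, hx, _, _, _ => by simp at hx
  | [a], x, y, hx, hy, hpx, hpy => by
    simp only [List.head?_cons, List.getLast?_singleton, Option.some.injEq] at hx hy
    exact absurd (hy ▸ hx ▸ hpx) hpy
  | a :: b :: t, x, y, hx, hy, hpx, hpy => by
    obtain rfl : a = x := by simpa using hx
    by_cases hpb : p b
    · obtain ⟨q, hq, hq₁, hq₂⟩ :=
        List.exists_mem_zip_tail_of_head?_of_getLast? p (l := b :: t) rfl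
          (List.getLast?_cons_cons ▸ hy) hpb hpy
      exact ⟨q, List.mem_cons_of_mem _ hq, hq₁, hq₂⟩
    · exact ⟨(a, b), by simp, hpx, hpb⟩

section Profiles

variable {D : Finset (Fin 4)}

def profileOfCounts {t : ℕ} (m : Fin t → ℕ) (b : Fin t → Ranking D) :
    Fin (∑ j, m j) → Ranking D :=
  fun i => b (finSigmaFinEquiv.symm i).1

theorem sum_profileOfCounts {M : Type*} [AddCommMonoid M] {t : ℕ} (m : Fin t → ℕ)
    (b : Fin t → Ranking D) (f : Ranking D → M) :
    ∑ i, f (profileOfCounts m b i) = ∑ j, m j • f (b j) := by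
  rw [← finSigmaFinEquiv.sum_comp, Fintype.sum_sigma]
  simp [profileOfCounts]

def pairScore (r : Ranking D) (x y : Fin 4) : ℤ :=
  (if rpos r x < rpos r y then 1 else 0) - (if rpos r y < rpos r x then 1 else 0)

theorem margin_eq_sum_pairScore {n : ℕ} (P : Fin n → Ranking D) (x y : Fin 4) :
    margin P x y = ∑ i, pairScore (P i) x y := by
  simp only [margin, pairScore, Finset.card_filter, Finset.sum_sub_distrib]
  push_cast
  rfl

theorem margin_profileOfCounts {t : ℕ} (m : Fin t → ℕ) (b : Fin t → Ranking D) (x y : Fin 4) :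
    margin (profileOfCounts m b) x y = ∑ j, (m j : ℤ) * pairScore (b j) x y := by
  rw [margin_eq_sum_pairScore, sum_profileOfCounts m b fun r => pairScore r x y]
  simp only [nsmul_eq_mul]

theorem margin_eraseCand {n : ℕ} (P : Fin n → Ranking D) {x u v : Fin 4} (hu : u ≠ x)
    (hv : v ≠ x) : margin (fun i => eraseCand x (P i)) u v = margin P u v := by
  have key : ∀ r : Ranking D, ∀ {u v}, u ≠ x → v ≠ x →
      (rpos (eraseCand x r) u < rpos (eraseCand x r) v ↔ rpos r u < rpos r v) :=
    fun r _ _ hu hv => List.idxOf_erase_lt_idxOf_erase_iff r.val hu hv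
  simp only [margin, key _ hu hv, key _ hv hu]

end Profiles

section Beatpath

variable {D : Finset (Fin 4)} {n : ℕ} (P : Fin n → Ranking D)

theorem margin_le_card (x y : Fin 4) : margin P x y ≤ n := by
  have h := (univ.filter fun i => rpos (P i) x < rpos (P i) y).card_le_univ
  simp only [Fintype.card_fin] at h
  unfold margin
  omega

theorem bddAbove_isPathStrength (x y : Fin 4) : BddAbove {s | IsPathStrength P x y s} := by
  refine ⟨n, ?_⟩
  rintro s ⟨l, -, -, -, -, hmin⟩
  obtain ⟨q, -, rfl⟩ := List.mem_map.mp (List.minimum_mem hmin)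
  exact margin_le_card P q.1 q.2

theorem isPathStrength_margin {x y : Fin 4} (hx : x ∈ D) (hy : y ∈ D) :
    IsPathStrength P x y (margin P x y) := by
  refine ⟨[x, y], by simp, ?_, rfl, rfl, by simp⟩
  simp [hx, hy]

theorem margin_le_beatpath {x y : Fin 4} (hx : x ∈ D) (hy : y ∈ D) :
    margin P x y ≤ beatpath P x y :=
  le_csSup (bddAbove_isPathStrength P x y) (isPathStrength_margin P hx hy)

theorem min_margin_le_beatpath {x y z : Fin 4} (hx : x ∈ D) (hy : y ∈ D) (hz : z ∈ D) :
    min (margin P x y) (margin P y z) ≤ beatpath P x z := by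
  refine le_csSup (bddAbove_isPathStrength P x z) ⟨[x, y, z], by simp, ?_, rfl, rfl, ?_⟩
  · simp [hx, hy, hz]
  · simp [List.minimum_cons]

theorem beatpath_le_of_cut (A : Finset (Fin 4)) {x y : Fin 4} {t : ℤ} (hx : x ∈ D) (hy : y ∈ D)
    (hxA : x ∈ A) (hyA : y ∉ A) (hcut : ∀ u ∈ A, ∀ v ∈ D, v ∉ A → margin P u v ≤ t) :
    beatpath P x y ≤ t := by
  refine csSup_le ⟨_, isPathStrength_margin P hx hy⟩ ?_
  rintro s ⟨l, -, hlD, hhead, hlast, hmin⟩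
  obtain ⟨q, hq, hq₁, hq₂⟩ :=
    List.exists_mem_zip_tail_of_head?_of_getLast? (· ∈ A) hhead hlast hxA hyA
  have hsq : (s : WithTop ℤ) ≤ margin P q.1 q.2 :=
    hmin ▸ List.minimum_le_of_mem' (List.mem_map_of_mem hq)
  exact (WithTop.coe_le_coe.mp hsq).trans
    (hcut _ hq₁ _ (hlD _ (List.mem_of_mem_tail (List.of_mem_zip hq).2)) hq₂)

theorem schulzeWinner_iff_of_beatpath_lt {x : Fin 4} (hx : x ∈ D)
    (h : ∀ y ∈ D, y ≠ x → beatpath P y x < beatpath P x y) (y : Fin 4) :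
    SchulzeWinner P y ↔ y = x := by
  refine ⟨fun ⟨hy, hwin⟩ => ?_, fun hyx => hyx ▸ ⟨hx, fun z hz hzx => (h z hz hzx).le⟩⟩
  by_contra hyx
  exact absurd (h y hy hyx) (hwin x hx (Ne.symm hyx)).not_gt

end Beatpath

def witnessBallots : Fin 6 → Ranking (univ : Finset (Fin 4)) :=
  ![⟨[3, 0, 1, 2], by decide, by decide⟩, ⟨[2, 0, 1, 3], by decide, by decide⟩,
    ⟨[1, 2, 0, 3], by decide, by decide⟩, ⟨[0, 1, 3, 2], by decide, by decide⟩,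
    ⟨[2, 0, 3, 1], by decide, by decide⟩, ⟨[3, 2, 0, 1], by decide, by decide⟩]

def witnessCounts (k : ℕ) : Fin 6 → ℕ := ![k + 7, k, 10, 2, 3, 4]

abbrev witness (k : ℕ) : Fin (∑ j, witnessCounts k j) → Ranking (univ : Finset (Fin 4)) :=
  profileOfCounts (witnessCounts k) witnessBallots

theorem sum_witnessCounts (k : ℕ) : ∑ j, witnessCounts k j = 2 * k + 26 := by
  simp [witnessCounts, Fin.sum_univ_six]; ring

theorem margin_witness (k : ℕ) (u v : Fin 4) :
    margin (witness k) u v =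
      ![![0, 2 * (k : ℤ) + 6, -8, 4],
        ![-(2 * (k : ℤ) + 6), 0, 12, -2],
        ![8, -12, 0, 0],
        ![-4, 2, 0, 0]] u v := by
  rw [margin_profileOfCounts]
  fin_cases u <;> fin_cases v <;>
    simp [Fin.sum_univ_six, witnessCounts, witnessBallots, pairScore, rpos] <;> ring

theorem card_filter_witness (k : ℕ) :
    (univ.filter fun i =>
      1 < ((rpos (witness k i) 0 : ℤ) - (rpos (witness k i) 1 : ℤ)).natAbs).card = 13 := by
  rw [card_filter, sum_profileOfCounts (witnessCounts k) witnessBallots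
    fun r => if 1 < ((rpos r 0 : ℤ) - (rpos r 1 : ℤ)).natAbs then 1 else 0]
  simp [Fin.sum_univ_six, witnessCounts, witnessBallots, rpos]

theorem sum_witness (k : ℕ) :
    ∑ i, ((((rpos (witness k i) 0 : ℤ) - (rpos (witness k i) 1 : ℤ)).natAbs : ℝ) - 1) = 13 := by
  rw [sum_profileOfCounts (witnessCounts k) witnessBallots
    fun r => ((((rpos r 0 : ℤ) - (rpos r 1 : ℤ)).natAbs : ℝ) - 1)]
  simp [Fin.sum_univ_six, witnessCounts, witnessBallots, rpos]
  norm_num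

theorem schulzeWinner_witness_iff {k : ℕ} (hk : 2 ≤ k) (y : Fin 4) :
    SchulzeWinner (witness k) y ↔ y = 0 := by
  refine schulzeWinner_iff_of_beatpath_lt _ (mem_univ 0) (fun z _ hz => ?_) y
  have hcut : ∀ w ∈ ({1, 2} : Finset (Fin 4)), beatpath (witness k) w 0 ≤ 8 := fun w hw =>
    beatpath_le_of_cut _ {1, 2} (mem_univ _) (mem_univ _) hw (by decide) (by
      intro u hu v _ hv
      fin_cases u <;> fin_cases v <;> simp_all [margin_witness]
      omega)
  fin_cases z
  · contradiction
  · calc beatpath (witness k) 1 0 ≤ 8 := hcut 1 (by simp)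
      _ < margin (witness k) 0 1 := by simp [margin_witness]; omega
      _ ≤ _ := margin_le_beatpath _ (mem_univ _) (mem_univ _)
  · calc beatpath (witness k) 2 0 ≤ 8 := hcut 2 (by simp)
      _ < min (margin (witness k) 0 1) (margin (witness k) 1 2) := by
        simp [margin_witness]; omega
      _ ≤ _ := min_margin_le_beatpath _ (mem_univ _) (mem_univ _) (mem_univ _)
  · calc beatpath (witness k) 3 0 ≤ 2 := beatpath_le_of_cut _ {3} (mem_univ _) (mem_univ _)
          (by simp) (by decide) (by
            intro u hu v _ hv
            fin_cases u <;> fin_cases v <;> simp_all [margin_witness])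
      _ < margin (witness k) 0 3 := by simp [margin_witness]
      _ ≤ _ := margin_le_beatpath _ (mem_univ _) (mem_univ _)

theorem schulzeWinner_witness_eraseCand_zero_iff (k : ℕ) (y : Fin 4) :
    SchulzeWinner (fun i => eraseCand 0 (witness k i)) y ↔ y = 3 := by
  refine schulzeWinner_iff_of_beatpath_lt _ (by decide) (fun z hzD hz => ?_) y
  have hcut : ∀ w ∈ ({1, 2} : Finset (Fin 4)),
      beatpath (fun i => eraseCand 0 (witness k i)) w 3 ≤ 0 := fun w hw =>
    beatpath_le_of_cut _ {1, 2} (by fin_cases hw <;> decide) (by decide) hw (by decide) (by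
      intro u hu v hvD hv
      fin_cases u <;> fin_cases v <;> simp_all [margin_eraseCand, margin_witness])
  fin_cases z
  · simp at hzD
  · calc _ ≤ 0 := hcut 1 (by simp)
      _ < margin (fun i => eraseCand 0 (witness k i)) 3 1 := by
        simp [margin_eraseCand, margin_witness]
      _ ≤ _ := margin_le_beatpath _ (by decide) (by decide)
  · calc _ ≤ 0 := hcut 2 (by simp)
      _ < min (margin (fun i => eraseCand 0 (witness k i)) 3 1)
          (margin (fun i => eraseCand 0 (witness k i)) 1 2) := by
        simp [margin_eraseCand, margin_witness]
      _ ≤ _ := min_margin_le_beatpath _ (by decide) (by decide) (by decide)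
  · contradiction

theorem schulzeWinner_witness_eraseCand_one_iff (k : ℕ) (y : Fin 4) :
    SchulzeWinner (fun i => eraseCand 1 (witness k i)) y ↔ y = 2 := by
  refine schulzeWinner_iff_of_beatpath_lt _ (by decide) (fun z hzD hz => ?_) y
  have hcut : ∀ w ∈ ({0, 3} : Finset (Fin 4)),
      beatpath (fun i => eraseCand 1 (witness k i)) w 2 ≤ 0 := fun w hw =>
    beatpath_le_of_cut _ {0, 3} (by fin_cases hw <;> decide) (by decide) hw (by decide) (by
      intro u hu v hvD hv
      fin_cases u <;> fin_cases v <;> simp_all [margin_eraseCand, margin_witness])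
  fin_cases z
  · calc _ ≤ 0 := hcut 0 (by simp)
      _ < margin (fun i => eraseCand 1 (witness k i)) 2 0 := by
        simp [margin_eraseCand, margin_witness]
      _ ≤ _ := margin_le_beatpath _ (by decide) (by decide)
  · simp at hzD
  · contradiction
  · calc _ ≤ 0 := hcut 3 (by simp)
      _ < min (margin (fun i => eraseCand 1 (witness k i)) 2 0)
          (margin (fun i => eraseCand 1 (witness k i)) 0 3) := by
        simp [margin_eraseCand, margin_witness]
      _ ≤ _ := min_margin_le_beatpath _ (by decide) (by decide) (by decide)

theorem exists_two_le_div_le (c : ℝ) {ε : ℝ} (hε : 0 < ε) :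
    ∃ k : ℕ, 2 ≤ k ∧ c / ((2 * k + 26 : ℕ) : ℝ) ≤ ε := by
  obtain ⟨k, hk⟩ := exists_nat_gt (c / ε)
  refine ⟨k + 2, by omega, ?_⟩
  rw [div_le_iff₀ (by positivity), div_lt_iff₀ hε] at *
  push_cast
  nlinarith

/-- **Schulze's rule is not weakly independent of approximate clones (four candidates).**
For every `α > 0` and `β > 0` there is a preference profile `P` over the four candidates
`a = 0, b = 1, c = 2, d = 3` of `Fin 4` such that: (i) the pair `{a,b}` has deletion-clone
value at most `α` and swap-clone value at most `β`; (ii) `a` is the unique Schulze winner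
of `P`; (iii) `d` is the unique Schulze winner of `P₋a`; and (iv) `c` is the unique Schulze
winner of `P₋b`. -/
theorem schulze_not_weakly_indep_approx_clones (α β : ℝ) (hα : 0 < α) (hβ : 0 < β) :
    ∃ (n : ℕ), 1 ≤ n ∧ ∃ P : Fin n → Ranking (univ : Finset (Fin 4)),
      -- (i) {a,b} = {0,1} are α-deletion clones and β-swap clones
      ((univ.filter fun i : Fin n =>
          1 < ((rpos (P i) 0 : ℤ) - (rpos (P i) 1 : ℤ)).natAbs).card : ℝ) / n ≤ α ∧
      (∑ i : Fin n, ((((rpos (P i) 0 : ℤ) - (rpos (P i) 1 : ℤ)).natAbs : ℝ) - 1)) / n ≤ β ∧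
      -- (ii) a = 0 is the unique Schulze winner of P
      SchulzeWinner P (0 : Fin 4) ∧
      (∀ y : Fin 4, y ≠ 0 → ¬ SchulzeWinner P y) ∧
      -- (iii) d = 3 is the unique Schulze winner of P₋a
      SchulzeWinner (fun i => eraseCand 0 (P i)) (3 : Fin 4) ∧
      (∀ y : Fin 4, y ≠ 3 → ¬ SchulzeWinner (fun i => eraseCand 0 (P i)) y) ∧
      -- (iv) c = 2 is the unique Schulze winner of P₋b
      SchulzeWinner (fun i => eraseCand 1 (P i)) (2 : Fin 4) ∧
      (∀ y : Fin 4, y ≠ 2 → ¬ SchulzeWinner (fun i => eraseCand 1 (P i)) y) := by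
  obtain ⟨k, hk, hkε⟩ := exists_two_le_div_le 13 (lt_min hα hβ)
  have hP := schulzeWinner_witness_iff hk
  have hPa := schulzeWinner_witness_eraseCand_zero_iff k
  have hPb := schulzeWinner_witness_eraseCand_one_iff k
  refine ⟨_, by rw [sum_witnessCounts]; omega, witness k, ?_, ?_, (hP 0).2 rfl,
    fun y hy h => hy ((hP y).1 h), (hPa 3).2 rfl, fun y hy h => hy ((hPa y).1 h),
    (hPb 2).2 rfl, fun y hy h => hy ((hPb y).1 h)⟩
  · rw [card_filter_witness, sum_witnessCounts]
    exact_mod_cast hkε.trans (min_le_left α β)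
  · rw [sum_witness, sum_witnessCounts]
    exact hkε.trans (min_le_right α β)
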